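/- (Deterministic core of Theorem 2.) Let f : ℝ → ℝ be differentiable with l ≤ f'(x) ≤ u for all x ∈ ℝ, where u ≥ l > 0. Let K ⊆ ℝ^p be a nonempty compact set, x* ∈ ℝ^p, and let x̄ be a minimizer of ‖x − x*‖₂ over K. Let A ∈ ℝ^{n×p}, η ∈ ℝⁿ, y = f(A x*) + η (f applied entrywise), and let ỹ ∈ ℝⁿ satisfy (1/√n)‖ỹ − y‖₂ ≤ τ for some τ ≥ 0. Let δ ≥ 0 and ρ ≥ 0, and assume: (i) for all v, w ∈ K, (1/2)‖v − w‖₂ − δ ≤ (1/√n)‖A(v − w)‖₂ ≤ (3/2)‖v − w‖₂ + δ; (ii) (1/√n)‖A(x* − x̄)‖₂ ≤ (3/2)‖x* − x̄‖₂; (iii) for all v ∈ K, (1/n)|⟨η, f(A v) − f(A x̄)⟩| ≤ ρ(‖v − x̄‖₂ + δ). Then there exists a constant C depending only on l and u such that every minimizer x̂ of ‖ỹ − f(Ax)‖₂ over x ∈ K satisfies ‖x̂ − x*‖₂ ≤ C( ‖x̄ − x*‖₂ + ρ + τ + δ ). -/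
import Mathlib

/-- The Euclidean (ℓ₂) norm of a vector in `ℝ^m`. -/
noncomputable def l2norm {m : ℕ} (v : Fin m → ℝ) : ℝ := Real.sqrt (∑ i, (v i) ^ 2)

/-- The Euclidean inner product on `ℝ^m`. -/
def dotp {m : ℕ} (v w : Fin m → ℝ) : ℝ := ∑ i, v i * w i

lemma l2norm_nonneg {m : ℕ} (v : Fin m → ℝ) : 0 ≤ l2norm v := Real.sqrt_nonneg _

lemma sq_l2norm {m : ℕ} (v : Fin m → ℝ) : l2norm v ^ 2 = ∑ i, (v i) ^ 2 :=
  Real.sq_sqrt (by positivity)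

lemma dotp_le_l2norm {m : ℕ} (v w : Fin m → ℝ) : dotp v w ≤ l2norm v * l2norm w :=
  Real.sum_mul_le_sqrt_mul_sqrt _ v w

lemma l2norm_add_le {m : ℕ} (v w : Fin m → ℝ) : l2norm (v + w) ≤ l2norm v + l2norm w := by
  have h1 : l2norm (v + w) ^ 2 ≤ (l2norm v + l2norm w) ^ 2 := by
    have hcs := dotp_le_l2norm v w
    have e1 := sq_l2norm (v + w)
    have e2 := sq_l2norm v
    have e3 := sq_l2norm w
    have hexp : ∑ i, ((v + w) i) ^ 2 = (∑ i, (v i)^2) + 2 * dotp v w + ∑ i, (w i)^2 := by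
      simp only [Pi.add_apply, dotp, Finset.mul_sum, ← Finset.sum_add_distrib]
      exact Finset.sum_congr rfl fun i _ => by ring
    nlinarith [hcs, e1, e2, e3]
  have h2 : 0 ≤ l2norm v + l2norm w := add_nonneg (l2norm_nonneg v) (l2norm_nonneg w)
  nlinarith [l2norm_nonneg (v + w), h2]

lemma l2norm_sub_comm {m : ℕ} (v w : Fin m → ℝ) : l2norm (v - w) = l2norm (w - v) := by
  unfold l2norm
  congr 1
  exact Finset.sum_congr rfl fun i _ => by simp [Pi.sub_apply]; ring

lemma mvt_eq {f f' : ℝ → ℝ} (hd : ∀ x, HasDerivAt f (f' x) x) {a b : ℝ} (hab : a < b) :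
    ∃ c, f b - f a = f' c * (b - a) := by
  have hcont : Continuous f := by
    rw [continuous_iff_continuousAt]; exact fun x => (hd x).differentiableAt.continuousAt
  obtain ⟨c, _, hc⟩ := exists_hasDerivAt_eq_slope f f' hab hcont.continuousOn (fun x _ => hd x)
  refine ⟨c, ?_⟩
  rw [hc, div_mul_cancel₀ _ (sub_ne_zero.mpr hab.ne')]

lemma mvt_bounds {l u : ℝ} (hl : 0 < l) {f f' : ℝ → ℝ}
    (hd : ∀ x, HasDerivAt f (f' x) x) (hb : ∀ x, l ≤ f' x ∧ f' x ≤ u) (a b : ℝ) :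
    l * |a - b| ≤ |f a - f b| ∧ |f a - f b| ≤ u * |a - b| := by
  have key : ∀ x y : ℝ, x < y → l * (y - x) ≤ f y - f x ∧ f y - f x ≤ u * (y - x) := by
    intro x y hxy
    obtain ⟨c, hc⟩ := mvt_eq hd hxy
    obtain ⟨h1, h2⟩ := hb c
    constructor <;> nlinarith
  rcases lt_trichotomy a b with h | h | h
  · obtain ⟨h1, h2⟩ := key a b h
    have hab : |a - b| = b - a := by rw [abs_sub_comm]; exact abs_of_pos (by linarith)
    have hfab : |f a - f b| = f b - f a := by
      rw [abs_sub_comm]; exact abs_of_nonneg (by nlinarith)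
    rw [hab, hfab]; exact ⟨h1, h2⟩
  · subst h; simp
  · obtain ⟨h1, h2⟩ := key b a h
    have hab : |a - b| = a - b := abs_of_pos (by linarith)
    have hfab : |f a - f b| = f a - f b := abs_of_nonneg (by nlinarith)
    rw [hab, hfab]; exact ⟨h1, h2⟩

lemma l2_comp_bounds {n : ℕ} {l u : ℝ} (hl : 0 < l) {f f' : ℝ → ℝ}
    (hd : ∀ x, HasDerivAt f (f' x) x) (hb : ∀ x, l ≤ f' x ∧ f' x ≤ u)
    (P Q : Fin n → ℝ) :
    l * l2norm (P - Q) ≤ l2norm (fun i => f (P i) - f (Q i)) ∧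
      l2norm (fun i => f (P i) - f (Q i)) ≤ u * l2norm (P - Q) := by
  have hu : 0 ≤ u := le_trans hl.le (le_trans (hb 0).1 (hb 0).2)
  have hsum : ∀ i : Fin n,
      l ^ 2 * (P i - Q i) ^ 2 ≤ (f (P i) - f (Q i)) ^ 2 ∧
      (f (P i) - f (Q i)) ^ 2 ≤ u ^ 2 * (P i - Q i) ^ 2 := by
    intro i
    obtain ⟨h1, h2⟩ := mvt_bounds hl hd hb (P i) (Q i)
    constructor
    · have := mul_self_le_mul_self (mul_nonneg hl.le (abs_nonneg (P i - Q i))) h1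
      nlinarith [this, sq_abs (P i - Q i), sq_abs (f (P i) - f (Q i))]
    · have := mul_self_le_mul_self (abs_nonneg (f (P i) - f (Q i))) h2
      nlinarith [this, sq_abs (P i - Q i), sq_abs (f (P i) - f (Q i))]
  have hlow : l ^ 2 * ∑ i, ((P - Q) i) ^ 2 ≤ ∑ i, (f (P i) - f (Q i)) ^ 2 := by
    rw [Finset.mul_sum]
    exact Finset.sum_le_sum fun i _ => by simpa [Pi.sub_apply] using (hsum i).1
  have hhigh : ∑ i, (f (P i) - f (Q i)) ^ 2 ≤ u ^ 2 * ∑ i, ((P - Q) i) ^ 2 := by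
    rw [Finset.mul_sum]
    exact Finset.sum_le_sum fun i _ => by simpa [Pi.sub_apply] using (hsum i).2
  constructor
  · have := Real.sqrt_le_sqrt hlow
    rwa [Real.sqrt_mul (by positivity) _, Real.sqrt_sq hl.le] at this
  · have := Real.sqrt_le_sqrt hhigh
    rwa [Real.sqrt_mul (by positivity) _, Real.sqrt_sq hu] at this

set_option maxHeartbeats 1000000 in
/-- Deterministic core of Theorem 2: under the TS-REC / JL / noise-concentration events
(i)–(iii), every nonlinear least-squares minimizer `x̂` over the compact set `K` satisfies
`‖x̂ − x*‖₂ ≤ C(‖x̄ − x*‖₂ + ρ + τ + δ)` for a constant `C` depending only on `l` and `u`. -/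
theorem thm2_deterministic_core (l u : ℝ) (hl : 0 < l) (hlu : l ≤ u) :
    ∃ C : ℝ, 0 < C ∧
      ∀ (n p : ℕ), 0 < n →
      ∀ f f' : ℝ → ℝ, (∀ x, HasDerivAt f (f' x) x) → (∀ x, l ≤ f' x ∧ f' x ≤ u) →
      ∀ K : Set (Fin p → ℝ), K.Nonempty → IsCompact K →
      ∀ xstar xbar : Fin p → ℝ, xbar ∈ K →
        (∀ x ∈ K, l2norm (xbar - xstar) ≤ l2norm (x - xstar)) →
      ∀ (A : Matrix (Fin n) (Fin p) ℝ) (η ytil : Fin n → ℝ) (τ δ ρ : ℝ),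
        0 ≤ τ → 0 ≤ δ → 0 ≤ ρ →
        -- `ỹ` is close to `y = f(Ax*) + η`
        (Real.sqrt n)⁻¹ * l2norm (fun i => ytil i - (f (A.mulVec xstar i) + η i)) ≤ τ →
        -- (i) TS-REC on `K`
        (∀ v ∈ K, ∀ w ∈ K,
          (1 / 2) * l2norm (v - w) - δ ≤
              (Real.sqrt n)⁻¹ * l2norm (A.mulVec v - A.mulVec w) ∧
            (Real.sqrt n)⁻¹ * l2norm (A.mulVec v - A.mulVec w) ≤
              (3 / 2) * l2norm (v - w) + δ) →
        -- (ii) JL-type bound at the pair `(x*, x̄)`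
        ((Real.sqrt n)⁻¹ * l2norm (A.mulVec xstar - A.mulVec xbar) ≤
          (3 / 2) * l2norm (xstar - xbar)) →
        -- (iii) noise concentration
        (∀ v ∈ K,
          (1 / (n : ℝ)) *
              |dotp η (fun i => f (A.mulVec v i) - f (A.mulVec xbar i))| ≤
            ρ * (l2norm (v - xbar) + δ)) →
        ∀ xhat ∈ K,
          (∀ x ∈ K,
            l2norm (fun i => ytil i - f (A.mulVec xhat i)) ≤
              l2norm (fun i => ytil i - f (A.mulVec x i))) →
          l2norm (xhat - xstar) ≤ C * (l2norm (xbar - xstar) + ρ + τ + δ) := by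
  have hu0 : 0 < u := lt_of_lt_of_le hl hlu
  set T : ℝ := 16*l^4 + 192*l^2 + 1024 + 288*l^2*u^2 with hT_def
  have hT0 : 0 < T := by positivity
  refine ⟨(T + 1)/l^2 + 2, by positivity, ?_⟩
  intro n p hn f f' hd hb K hKne hKcomp xstar xbar hxbarK hxbarmin A η ytil τ δ ρ
    hτ hδ hρ hytil hTSREC hJL hnoise xhat hxhatK hopt
  set C1 : ℝ := (T + 1)/l^2 with hC1_def
  have hC10 : 0 < C1 := by positivity
  set s := l2norm (xbar - xstar) with hs_def
  set r := l2norm (xhat - xbar) with hr_def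
  have hs0 : 0 ≤ s := l2norm_nonneg _
  have hr0 : 0 ≤ r := l2norm_nonneg _
  have hn0 : (0:ℝ) < (n:ℝ) := by exact_mod_cast hn
  set N := Real.sqrt (n:ℝ) with hN_def
  have hN : 0 < N := Real.sqrt_pos.mpr hn0
  have hN2 : N^2 = (n:ℝ) := Real.sq_sqrt hn0.le
  set S := s + ρ + τ + δ with hS_def
  have hS0 : 0 ≤ S := by positivity
  have htri : l2norm (xhat - xstar) ≤ r + s := by
    have hsplit : xhat - xstar = (xhat - xbar) + (xbar - xstar) := by abel
    rw [hsplit]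
    exact l2norm_add_le _ _
  -- goal restated
  have hgoal : r + s ≤ (C1 + 2) * S → l2norm (xhat - xstar) ≤ (C1 + 2) * S := fun h =>
    le_trans htri h
  show l2norm (xhat - xstar) ≤ (C1 + 2) * S
  apply hgoal
  rcases le_or_gt r (2*δ) with hcase | hcase
  · -- trivial case : r ≤ 2δ
    linarith only [mul_nonneg hC10.le hS0, hS_def, hcase, hδ, hρ, hτ, hs0]
  · -- main case
    -- notation
    have hD0 : 0 ≤ l2norm (fun i => f (A.mulVec xhat i) - f (A.mulVec xbar i)) :=
      l2norm_nonneg _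
    set D := l2norm (fun i => f (A.mulVec xhat i) - f (A.mulVec xbar i)) with hD_def
    -- basic inequality from optimality
    have hopt2 := hopt xbar hxbarK
    have hsq : ∑ i, (ytil i - f (A.mulVec xhat i))^2 ≤
        ∑ i, (ytil i - f (A.mulVec xbar i))^2 := by
      have e1 := sq_l2norm (fun i => ytil i - f (A.mulVec xhat i))
      have e2 := sq_l2norm (fun i => ytil i - f (A.mulVec xbar i))
      nlinarith only [hopt2, e1, e2, l2norm_nonneg (fun i => ytil i - f (A.mulVec xhat i)),
        l2norm_nonneg (fun i => ytil i - f (A.mulVec xbar i))]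
    have hbasic : D^2 ≤ 2 * (dotp (fun i => ytil i - (f (A.mulVec xstar i) + η i))
          (fun i => f (A.mulVec xhat i) - f (A.mulVec xbar i))
        + dotp η (fun i => f (A.mulVec xhat i) - f (A.mulVec xbar i))
        + dotp (fun i => f (A.mulVec xstar i) - f (A.mulVec xbar i))
          (fun i => f (A.mulVec xhat i) - f (A.mulVec xbar i))) := by
      have hD2 := sq_l2norm (fun i => f (A.mulVec xhat i) - f (A.mulVec xbar i))
      have hexp : ∑ i, (ytil i - f (A.mulVec xhat i))^2 =
          (∑ i, (ytil i - f (A.mulVec xbar i))^2)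
          - 2 * ((∑ i, (ytil i - (f (A.mulVec xstar i) + η i)) *
                (f (A.mulVec xhat i) - f (A.mulVec xbar i)))
            + (∑ i, η i * (f (A.mulVec xhat i) - f (A.mulVec xbar i)))
            + (∑ i, (f (A.mulVec xstar i) - f (A.mulVec xbar i)) *
                (f (A.mulVec xhat i) - f (A.mulVec xbar i))))
          + ∑ i, (f (A.mulVec xhat i) - f (A.mulVec xbar i))^2 := by
        simp only [Finset.mul_sum, ← Finset.sum_add_distrib, ← Finset.sum_sub_distrib]
        exact Finset.sum_congr rfl fun i _ => by ring
      simp only [dotp]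
      rw [← hD_def] at hD2
      linarith only [hsq, hexp.ge, hexp.le, hD2.ge, hD2.le]
    -- bound the three inner products
    have hE : l2norm (fun i => ytil i - (f (A.mulVec xstar i) + η i)) ≤ N * τ := by
      have h2 := mul_le_mul_of_nonneg_left hytil hN.le
      rwa [← mul_assoc, mul_inv_cancel₀ hN.ne', one_mul] at h2
    have hdot_e : dotp (fun i => ytil i - (f (A.mulVec xstar i) + η i))
        (fun i => f (A.mulVec xhat i) - f (A.mulVec xbar i)) ≤ (N * τ) * D := by
      refine le_trans (dotp_le_l2norm _ _) ?_
      rw [← hD_def]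
      exact mul_le_mul_of_nonneg_right hE hD0
    have hdot_η : dotp η (fun i => f (A.mulVec xhat i) - f (A.mulVec xbar i)) ≤
        (n:ℝ) * (ρ * (r + δ)) := by
      have h := hnoise xhat hxhatK
      rw [← hr_def] at h
      have h2 := mul_le_mul_of_nonneg_left h hn0.le
      rw [← mul_assoc, mul_one_div, div_self hn0.ne', one_mul] at h2
      exact le_trans (le_abs_self _) h2
    have hcomp := l2_comp_bounds hl hd hb (A.mulVec xstar) (A.mulVec xbar)
    have hscomm : l2norm (xstar - xbar) = s := l2norm_sub_comm xstar xbar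
    have hB : l2norm (fun i => f (A.mulVec xstar i) - f (A.mulVec xbar i)) ≤
        u * (N * ((3/2) * s)) := by
      refine le_trans hcomp.2 ?_
      have h2 := mul_le_mul_of_nonneg_left hJL hN.le
      rw [← mul_assoc, mul_inv_cancel₀ hN.ne', one_mul, hscomm] at h2
      exact mul_le_mul_of_nonneg_left (by linarith) hu0.le
    have hdot_b : dotp (fun i => f (A.mulVec xstar i) - f (A.mulVec xbar i))
        (fun i => f (A.mulVec xhat i) - f (A.mulVec xbar i)) ≤ (u * (N * ((3/2) * s))) * D := by
      refine le_trans (dotp_le_l2norm _ _) ?_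
      rw [← hD_def]
      exact mul_le_mul_of_nonneg_right hB hD0
    -- quadratic upper bound on D
    have hquad : D^2 ≤ 2*(N*τ*D) + 2*((n:ℝ)*(ρ*(r+δ))) + 3*(u*N*s*D) := by
      linarith only [hbasic, hdot_e, hdot_η, hdot_b]
    have hNeq : N^2*(2*τ+3*u*s)^2 = (n:ℝ)*(2*τ+3*u*s)^2 := by rw [hN2]
    have hDsq_up : D^2 ≤ 4*((n:ℝ)*(ρ*(r+δ))) + (n:ℝ)*(2*τ+3*u*s)^2 := by
      linarith only [hquad, sq_nonneg (D - N*(2*τ+3*u*s)), hNeq]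
    -- lower bound on D
    have hcomp2 := l2_comp_bounds hl hd hb (A.mulVec xhat) (A.mulVec xbar)
    have hAr : N * (r/2 - δ) ≤ l2norm (A.mulVec xhat - A.mulVec xbar) := by
      have h := (hTSREC xhat hxhatK xbar hxbarK).1
      rw [← hr_def] at h
      have h2 := mul_le_mul_of_nonneg_left h hN.le
      rw [← mul_assoc, mul_inv_cancel₀ hN.ne', one_mul] at h2
      calc N * (r/2 - δ) = N * (1/2 * r - δ) := by ring
      _ ≤ l2norm (A.mulVec xhat - A.mulVec xbar) := h2
    have hDlow : l * (N * (r/2 - δ)) ≤ D := by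
      rw [hD_def]
      exact le_trans (mul_le_mul_of_nonneg_left hAr hl.le) hcomp2.1
    have hhalf : 0 ≤ r/2 - δ := by linarith
    have hDlow_sq : (l * (N * (r/2 - δ)))^2 ≤ D^2 := by
      have h0 : 0 ≤ l * (N * (r/2 - δ)) := by positivity
      exact pow_le_pow_left₀ h0 hDlow 2
    have hNeq2 : N^2*(l^2*(r/2-δ)^2) = (n:ℝ)*(l^2*(r/2-δ)^2) := by rw [hN2]
    have hA2 : l^2*(n:ℝ)*((r/2-δ))^2 ≤ D^2 := by
      linarith only [hDlow_sq, hNeq2]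
    -- cancel n
    have hkey_pre : (n:ℝ) * (l^2*(r/2-δ)^2) ≤ (n:ℝ) * (4*(ρ*(r+δ)) + (2*τ+3*u*s)^2) := by
      linarith only [hA2, hDsq_up]
    have hkey : l^2*(r/2-δ)^2 ≤ 4*(ρ*(r+δ)) + (2*τ+3*u*s)^2 :=
      le_of_mul_le_mul_left hkey_pre hn0
    -- endgame : pure polynomial
    have hkey2 : l^2*(l^2*(r/2-δ)^2) ≤ l^2*(4*(ρ*(r+δ)) + (2*τ+3*u*s)^2) :=
      mul_le_mul_of_nonneg_left hkey (by positivity)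
    have h1 : (0:ℝ) ≤ l^4 * (r - 4*δ)^2 := by positivity
    have h2 : (0:ℝ) ≤ (l^2*r - 32*ρ)^2 := sq_nonneg _
    have h3 : (0:ℝ) ≤ l^2 * (ρ - δ)^2 := by positivity
    have h4 : (0:ℝ) ≤ l^2 * (2*τ - 3*u*s)^2 := by positivity
    have hpoly : l^4*r^2 ≤ 16*l^4*δ^2 + 32*l^2*δ^2 + 1024*ρ^2 + 32*l^2*ρ^2
        + 128*l^2*τ^2 + 288*l^2*u^2*s^2 := by
      linarith only [hkey2, h1, h2, h3, h4]
    have hTbound : l^4*r^2 ≤ T * (δ^2+ρ^2+τ^2+s^2) := by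
      refine le_trans hpoly ?_
      rw [hT_def]
      linarith only [mul_nonneg (pow_nonneg hl.le 4) (sq_nonneg δ),
        mul_nonneg (pow_nonneg hl.le 4) (sq_nonneg ρ),
        mul_nonneg (pow_nonneg hl.le 4) (sq_nonneg τ),
        mul_nonneg (pow_nonneg hl.le 4) (sq_nonneg s),
        mul_nonneg (pow_nonneg hl.le 2) (sq_nonneg δ),
        mul_nonneg (pow_nonneg hl.le 2) (sq_nonneg ρ),
        mul_nonneg (pow_nonneg hl.le 2) (sq_nonneg τ),
        mul_nonneg (pow_nonneg hl.le 2) (sq_nonneg s),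
        sq_nonneg δ, sq_nonneg ρ, sq_nonneg τ, sq_nonneg s,
        mul_nonneg (mul_nonneg (pow_nonneg hl.le 2) (sq_nonneg u)) (sq_nonneg δ),
        mul_nonneg (mul_nonneg (pow_nonneg hl.le 2) (sq_nonneg u)) (sq_nonneg ρ),
        mul_nonneg (mul_nonneg (pow_nonneg hl.le 2) (sq_nonneg u)) (sq_nonneg τ),
        mul_nonneg (mul_nonneg (pow_nonneg hl.le 2) (sq_nonneg u)) (sq_nonneg s)]
    have hSig : δ^2+ρ^2+τ^2+s^2 ≤ S^2 := by
      rw [hS_def]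
      linarith only [mul_nonneg hδ hρ, mul_nonneg hδ hτ, mul_nonneg hδ hs0,
        mul_nonneg hρ hτ, mul_nonneg hρ hs0, mul_nonneg hτ hs0]
    have hTS : l^4*r^2 ≤ T * S^2 :=
      le_trans hTbound (mul_le_mul_of_nonneg_left hSig hT0.le)
    have hC1sq : l^4 * C1^2 = (T+1)^2 := by
      rw [hC1_def]
      field_simp
    have hsq_final : (l^2*r)^2 ≤ (l^2*(C1*S))^2 := by
      have hTT : T ≤ (T+1)^2 := by nlinarith only [sq_nonneg T, hT0.le]
      have h5 : T * S^2 ≤ (T+1)^2 * S^2 :=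
        mul_le_mul_of_nonneg_right hTT (sq_nonneg S)
      calc (l^2*r)^2 = l^4*r^2 := by ring
      _ ≤ T * S^2 := hTS
      _ ≤ (T+1)^2 * S^2 := h5
      _ = l^4 * C1^2 * S^2 := by rw [hC1sq]
      _ = (l^2*(C1*S))^2 := by ring
    have hrC1S : r ≤ C1 * S := by
      have ha : 0 ≤ l^2*r := by positivity
      have hb2 : 0 ≤ l^2*(C1*S) := by positivity
      have hlr : l^2*r ≤ l^2*(C1*S) := by nlinarith only [hsq_final, ha, hb2]
      have hl2 : (0:ℝ) < l^2 := by positivity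
      exact le_of_mul_le_mul_left hlr hl2
    linarith only [hrC1S, hS0, hS_def, hρ, hτ, hδ]
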